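/- arXiv:2010.11597 — 2 statements merged into one kernel-verified Lean document; each statement's English description precedes it below -/
import Mathlib

section
/- Let κ be an uncountable regular cardinal such that μ^ω ≥ κ for some cardinal μ < κ, and let T be a κ-Kurepa subtree of ^{<κ}κ such that the cardinality of [T] is strictly greater than κ^{<κ}. Then the set [T] is not a continuous image of ^κκ. -/
open Cardinal Set

noncomputable section

namespace GBaire

universe u

/-- The underlying well-ordered set of the cardinal `κ`, i.e. the type of ordinals `< κ`. -/
abbrev K (κ : Cardinal.{u}) : Type u := κ.ord.ToType

/-- The set `^{<κ}κ` of all functions from a proper initial segment of `κ` to `κ`. -/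
abbrev PreFun (κ : Cardinal.{u}) : Type u := Σ α : K κ, ({β : K κ // β < α} → K κ)

variable (κ : Cardinal.{u})

/-- The restriction `x ↾ α` of a function `x ∈ ^κκ` to the initial segment determined by `α`. -/
def resT (x : K κ → K κ) (α : K κ) : PreFun κ := ⟨α, fun β => x β.1⟩

/-- The restriction of `s ∈ ^{<κ}κ` to (the minimum of its domain and) `γ`.  When
`γ ≤ s.1` this is the restriction `s ↾ γ`; otherwise it equals `s`. -/
def cut (s : PreFun κ) (γ : K κ) : PreFun κ :=
  ⟨min γ s.1, fun β => s.2 ⟨β.1, lt_of_lt_of_le β.2 (min_le_right _ _)⟩⟩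

/-- A subtree of `^{<κ}κ`: a set of elements of `^{<κ}κ` closed under restrictions
to smaller ordinals. -/
def IsSubtree (T : Set (PreFun κ)) : Prop :=
  ∀ s ∈ T, ∀ γ : K κ, γ < s.1 → cut κ s γ ∈ T

/-- The `α`-th level `T(α)` of `T`. -/
def level (T : Set (PreFun κ)) (α : K κ) : Set (PreFun κ) := {s ∈ T | s.1 = α}

/-- The set `[T]` of cofinal branches of `T`, i.e. all `x ∈ ^κκ` all of whose
restrictions lie in `T`. -/
def branches (T : Set (PreFun κ)) : Set (K κ → K κ) := {x | ∀ α : K κ, resT κ x α ∈ T}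

/-- `T` is a `κ`-Kurepa subtree of `^{<κ}κ`: a subtree all of whose levels are nonempty
of cardinality `< κ` and with at least `κ⁺` many cofinal branches. -/
def IsKurepa (T : Set (PreFun κ)) : Prop :=
  IsSubtree κ T ∧ (∀ α : K κ, (level κ T α).Nonempty ∧ #(level κ T α) < κ) ∧
    Order.succ κ ≤ #(branches κ T)

/-- The basic open set `N_s = {x ∈ ^κκ | s ⊆ x}`. -/
def Nbhd (s : PreFun κ) : Set (K κ → K κ) := {x | resT κ x s.1 = s}

/-- The topology of the generalized Baire space `^κκ`, generated by the sets `N_s`. -/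
def baire : TopologicalSpace (K κ → K κ) :=
  TopologicalSpace.generateFrom {U | ∃ s : PreFun κ, U = Nbhd κ s}

/-- `X` is a continuous image of `^κκ`: there is a continuous surjection from `^κκ`
onto `X` (with the subspace topology). -/
def IsContImage (X : Set (K κ → K κ)) : Prop :=
  letI := baire κ
  ∃ f : (K κ → K κ) → X, Continuous f ∧ Function.Surjective f

/-- `X` is a retract of `^κκ`: there is a continuous `r : ^κκ → ^κκ` with range
contained in `X` that is the identity on `X`. -/
def IsRetract (X : Set (K κ → K κ)) : Prop :=
  letI := baire κ
  ∃ r : (K κ → K κ) → (K κ → K κ),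
    Continuous r ∧ Set.range r ⊆ X ∧ ∀ x ∈ X, r x = x

/-- `y` is an isolated point of `Y ⊆ ^κκ`. -/
def IsIsolatedIn (Y : Set (K κ → K κ)) (y : K κ → K κ) : Prop :=
  y ∈ Y ∧ ∃ α : K κ, Nbhd κ (resT κ y α) ∩ Y = {y}

/-- `T` is slim: `|T(α)| ≤ |α|` for all sufficiently large `α < κ`. -/
def IsSlim (T : Set (PreFun κ)) : Prop :=
  ∃ α₀ : K κ, ∀ α : K κ, α₀ ≤ α → #(level κ T α) ≤ #{β : K κ // β < α}

/-- `C ⊆ κ` is closed: it contains every least upper bound of a nonempty subset of `C`. -/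
def ClosedIn (C : Set (K κ)) : Prop :=
  ∀ A ⊆ C, A.Nonempty → ∀ x : K κ, IsLUB A x → x ∈ C

/-- `C ⊆ κ` is unbounded in `κ`. -/
def UnboundedIn (C : Set (K κ)) : Prop := ∀ x : K κ, ∃ y ∈ C, x < y

/-- `S ⊆ κ` is stationary in `κ`: it meets every closed unbounded subset of `κ`. -/
def Stationary (S : Set (K κ)) : Prop :=
  ∀ C : Set (K κ), ClosedIn κ C → UnboundedIn κ C → (S ∩ C).Nonempty

/-- `T` is stationary slim: `|T(α)| ≤ |α|` for stationarily many `α < κ`. -/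
def StatSlim (T : Set (PreFun κ)) : Prop :=
  Stationary κ {α : K κ | #(level κ T α) ≤ #{β : K κ // β < α}}

/-- `α` is a limit ordinal (as an element of `κ`): it is neither the least element
nor a successor. -/
def IsLimitElt (α : K κ) : Prop :=
  (∃ β : K κ, β < α) ∧ ∀ β : K κ, β < α → ∃ γ : K κ, β < γ ∧ γ < α

/-- The boundary `∂T` of a subtree `T`: the minimal elements of `^{<κ}κ \ T`. -/
def boundary (T : Set (PreFun κ)) : Set (PreFun κ) :=
  {t | t ∉ T ∧ ∀ γ : K κ, γ < t.1 → cut κ t γ ∈ T}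

/-- `T` is superthin: for every limit ordinal `α < κ`, the set of elements of
`T ∪ ∂T` with domain `α` has cardinality `< κ`. -/
def IsSuperthin (T : Set (PreFun κ)) : Prop :=
  ∀ α : K κ, IsLimitElt κ α → #{s ∈ T ∪ boundary κ T | s.1 = α} < κ

/-- `T` is pruned: every element of `T` has a proper extension in `T`. -/
def IsPruned (T : Set (PreFun κ)) : Prop :=
  ∀ s ∈ T, ∃ t ∈ T, s.1 < t.1 ∧ cut κ t s.1 = s

/-- `T` is `<κ`-closed: the union of every (strictly increasing with respect to proper
end-extension) sequence of elements of `T` indexed by an ordinal `< κ` again lies in `T`.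
Here `u` is the union of the sequence `s` iff the domain of `u` is the least upper bound
of the domains of the `s ξ` and every `s ξ` is a restriction of `u`. -/
def IsLtClosed (T : Set (PreFun κ)) : Prop :=
  ∀ (γ : K κ) (s : {ξ : K κ // ξ < γ} → PreFun κ),
    (∀ ξ ζ : {ξ : K κ // ξ < γ}, ξ < ζ → (s ξ).1 < (s ζ).1 ∧ cut κ (s ζ) (s ξ).1 = s ξ) →
    (∀ ξ, s ξ ∈ T) →
    ∀ u : PreFun κ, IsLUB (Set.range fun ξ => (s ξ).1) u.1 →
      (∀ ξ, cut κ u (s ξ).1 = s ξ) → u ∈ T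

/-- `T` contains a Cantor subtree. -/
def HasCantorSubtree (T : Set (PreFun κ)) : Prop :=
  ∃ (l : ℕ → K κ) (lam : K κ), StrictMono l ∧ IsLUB (Set.range l) lam ∧
    (level κ T lam).Nonempty ∧
    ∃ B ⊆ level κ T lam, ¬ B.Countable ∧
      ∀ n : ℕ, ((fun t => cut κ t (l n)) '' B).Countable

/-- proper end-extension on `^{<κ}κ`. -/
def pext (s t : PreFun κ) : Prop := s.1 < t.1 ∧ cut κ t s.1 = s

/-- A set `A ⊆ ^{<κ}κ`, regarded as a tree under proper end-extension, is trivially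
coherent: it is order-isomorphic to a subtree of `^{<λ}2` (for `λ` its height) all of
whose elements `t` satisfy that `t⁻¹{0}` is finite.  (Here the comparison tree is
realized as a subtree `U` of `^{<κ}κ` taking only the values `0` and `1`, i.e. values
with at most one predecessor, such that each `u ∈ U` takes the value `0`, i.e. the
value with no predecessor, only finitely often.) -/
def TriviallyCoherent (A : Set (PreFun κ)) : Prop :=
  ∃ U : Set (PreFun κ),
    IsSubtree κ U ∧
    (∀ u ∈ U, ∀ β : {b : K κ // b < u.1}, #{γ : K κ // γ < u.2 β} ≤ 1) ∧
    (∀ u ∈ U, {β : {b : K κ // b < u.1} | ¬ ∃ γ : K κ, γ < u.2 β}.Finite) ∧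
    ∃ f : A → U, Function.Bijective f ∧
      ∀ s t : A, pext κ s.1 t.1 ↔ pext κ (f s).1 (f t).1

/-- `T` is locally coherent: each of its proper initial segments `T ∩ ^{<α}κ` is
trivially coherent. -/
def LocallyCoherent (T : Set (PreFun κ)) : Prop :=
  ∀ α : K κ, TriviallyCoherent κ {s ∈ T | s.1 < α}

end GBaire

namespace GBaire

/-!
Call `x` rich for a continuous `F` if every neighbourhood of `x` has more than `κ^{<κ}` images.
The images of non-rich points are covered by `κ^{<κ}` sets of size `≤ κ^{<κ}`, so when
`|range F| > κ^{<κ}` rich points exist, and every neighbourhood of a rich point contains `μ`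
rich points with pairwise distinct images. Splitting repeatedly, and shrinking neighbourhoods
by continuity so that the images of the children are separated below a common level, gives a
`μ`-branching tree of height `ω`. Regularity of `κ` bounds all its `< κ` separation levels by
one `B`, and distinct branches of the tree then have images that differ below `B`. For
`F : ^κκ → [T]` this puts `μ^ω ≥ κ` points into the level `T(B)`, which is smaller than `κ`.
-/

open Topology

variable {κ : Cardinal.{u}}

theorem resT_eq_resT_iff {x y : K κ → K κ} {β : K κ} :
    resT κ x β = resT κ y β ↔ EqOn x y (Iio β) := by
  simp [resT, funext_iff, EqOn]

theorem le_card_preFun : κ ≤ #(PreFun κ) := by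
  simpa [mk_toType] using mk_le_of_injective
    (f := fun α : K κ => (⟨α, fun β => β.1⟩ : PreFun κ)) fun _ _ h => congrArg Sigma.fst h

theorem exists_forall_lt_of_card_lt (hreg : κ.IsRegular) {ι : Type u} (g : ι → K κ)
    (hι : #ι < κ) : ∃ b, ∀ i, g i < b := by
  have : ¬ IsCofinal (range g) := fun h =>
    ((Order.cof_le h).trans mk_range_le).not_gt (by rwa [Ordinal.cof_toType, hreg.cof_ord])
  simpa using not_isCofinal_iff.1 this

theorem exists_eqOn_subset_of_isOpen [Nonempty (K κ)] {U : Set (K κ → K κ)}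
    (hU : IsOpen[baire κ] U) {x : K κ → K κ} (hx : x ∈ U) :
    ∃ β, {y | EqOn y x (Iio β)} ⊆ U := by
  induction hU generalizing x with
  | basic V hV =>
    obtain ⟨s, rfl⟩ := hV
    exact ⟨s.1, fun y hy => (resT_eq_resT_iff.2 hy).trans hx⟩
  | univ => exact ⟨Classical.arbitrary _, subset_univ _⟩
  | inter V W _ _ ihV ihW =>
    obtain ⟨β, hβ⟩ := ihV hx.1
    obtain ⟨γ, hγ⟩ := ihW hx.2
    exact ⟨max β γ, fun y hy => ⟨hβ (hy.mono (Iio_subset_Iio (le_max_left _ _))),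
      hγ (hy.mono (Iio_subset_Iio (le_max_right _ _)))⟩⟩
  | sUnion S _ ih =>
    obtain ⟨V, hVS, hxV⟩ := hx
    obtain ⟨β, hβ⟩ := ih V hVS hxV
    exact ⟨β, hβ.trans (subset_sUnion_of_mem hVS)⟩

theorem exists_eqOn_of_continuous {F : (K κ → K κ) → K κ → K κ}
    (hF : Continuous[baire κ, baire κ] F) (x : K κ → K κ) (α : K κ) :
    ∃ β, ∀ y, EqOn y x (Iio β) → EqOn (F y) (F x) (Iio α) := by
  let _ := baire κ
  have : Nonempty (K κ) := ⟨α⟩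
  have hopen : IsOpen (Nbhd κ (resT κ (F x) α)) := .basic _ ⟨_, rfl⟩
  obtain ⟨β, hβ⟩ := exists_eqOn_subset_of_isOpen (hopen.preimage hF) (x := x) rfl
  exact ⟨β, fun y hy => resT_eq_resT_iff.1 (hβ hy)⟩

theorem exists_forall_eqOn_of_eqOn_succ {X Y : Type*} {x : ℕ → X → Y} {s : ℕ → Set X}
    (hs : Monotone s) (hx : ∀ n, EqOn (x (n + 1)) (x n) (s n)) :
    ∃ z : X → Y, ∀ n, EqOn z (x n) (s n) := by
  classical
  have hchain : ∀ m n, m ≤ n → EqOn (x n) (x m) (s m) := by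
    intro m n hmn
    induction n, hmn using Nat.le_induction with
    | base => exact eqOn_refl _ _
    | succ n hmn ih => exact ((hx n).mono (hs hmn)).trans ih
  refine ⟨fun a => if h : ∃ n, a ∈ s n then x (Nat.find h) a else x 0 a, fun n a ha => ?_⟩
  have h : ∃ n, a ∈ s n := ⟨n, ha⟩
  simp only [dif_pos h]
  exact (hchain _ n (Nat.find_min' h ha) (Nat.find_spec h)).symm

section Rich

variable {F : (K κ → K κ) → K κ → K κ}

variable (F) in
def IsRich (x : K κ → K κ) : Prop :=
  ∀ β, #(PreFun κ) < #(F '' {y | EqOn y x (Iio β)})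

theorem card_image_not_isRich_le (hκ : ℵ₀ ≤ κ) :
    #(F '' {x | ¬ IsRich F x}) ≤ #(PreFun κ) := by
  set ν := #(PreFun κ)
  have hsub : F '' {x | ¬ IsRich F x} ⊆
      ⋃ s : {s : PreFun κ // #(F '' Nbhd κ s) ≤ ν}, F '' Nbhd κ s := by
    rintro _ ⟨x, hx, rfl⟩
    obtain ⟨β, hβ⟩ := not_forall.1 hx
    have hN : Nbhd κ (resT κ x β) = {y | EqOn y x (Iio β)} := ext fun _ => resT_eq_resT_iff
    exact mem_iUnion.2 ⟨⟨resT κ x β, by rwa [hN, ← not_lt]⟩, x, rfl, rfl⟩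
  calc #(F '' {x | ¬ IsRich F x})
      ≤ #{s : PreFun κ // #(F '' Nbhd κ s) ≤ ν} * ⨆ s : {s : PreFun κ // #(F '' Nbhd κ s) ≤ ν},
          #(F '' Nbhd κ s) := (mk_le_mk_of_subset hsub).trans (mk_iUnion_le _)
    _ ≤ ν * ν := mul_le_mul' (mk_subtype_le _) (ciSup_le' fun s => s.2)
    _ = ν := mul_eq_self (hκ.trans le_card_preFun)

theorem lt_card_image_inter_isRich (hκ : ℵ₀ ≤ κ) {S : Set (K κ → K κ)}
    (hS : #(PreFun κ) < #(F '' S)) : #(PreFun κ) < #(F '' (S ∩ {x | IsRich F x})) := by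
  by_contra! h
  have hsub : F '' S ⊆ F '' (S ∩ {x | IsRich F x}) ∪ F '' {x | ¬ IsRich F x} := by
    rintro _ ⟨x, hx, rfl⟩
    by_cases hr : IsRich F x
    · exact Or.inl ⟨x, ⟨hx, hr⟩, rfl⟩
    · exact Or.inr ⟨x, hr, rfl⟩
  refine hS.not_ge ((mk_le_mk_of_subset hsub).trans ((mk_union_le _ _).trans ?_))
  exact (add_le_add h (card_image_not_isRich_le hκ)).trans
    (add_eq_self (hκ.trans le_card_preFun)).le

theorem exists_split (hκ : ℵ₀ ≤ κ) (hreg : κ.IsRegular) (hF : Continuous[baire κ, baire κ] F)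
    {I : Type u} (hI : #I < κ) {x : K κ → K κ} (hx : IsRich F x) (β : K κ) :
    ∃ (α : K κ) (y : I → K κ → K κ) (δ : I → K κ), ∀ i,
      IsRich F (y i) ∧ EqOn (y i) x (Iio β) ∧ β ≤ δ i ∧
      (∀ z, EqOn z (y i) (Iio (δ i)) → EqOn (F z) (F (y i)) (Iio α)) ∧
      ∀ j, i ≠ j → ¬ EqOn (F (y i)) (F (y j)) (Iio α) := by
  obtain ⟨e⟩ : Nonempty (I ↪ F '' ({y | EqOn y x (Iio β)} ∩ {y | IsRich F y})) :=
    (le_def _ _).1 (hI.le.trans (le_card_preFun.trans (lt_card_image_inter_isRich hκ (hx β)).le))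
  choose y hy hye using fun i => (e i).2
  have hinj : Function.Injective (F ∘ y) := fun i j h =>
    e.injective (Subtype.ext ((hye i).symm.trans (h.trans (hye j))))
  choose γ hγ using fun p : {p : I × I // p.1 ≠ p.2} => Function.ne_iff.1 (hinj.ne p.2)
  obtain ⟨α, hα⟩ := exists_forall_lt_of_card_lt hreg γ <| (mk_subtype_le _).trans_lt <| by
    rw [mk_prod, lift_id]
    exact mul_lt_of_lt hκ hI hI
  choose ε hε using fun i => exists_eqOn_of_continuous hF (y i) α
  refine ⟨α, y, fun i => max β (ε i), fun i => ⟨(hy i).2, (hy i).1, le_max_left _ _,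
    fun z hz => hε i z (hz.mono (Iio_subset_Iio (le_max_right _ _))),
    fun j hij h => hγ ⟨(i, j), hij⟩ (h (hα _))⟩⟩

theorem exists_isRich (hκ : ℵ₀ ≤ κ) (hF : #(PreFun κ) < #(range F)) : ∃ x, IsRich F x := by
  rw [← image_univ] at hF
  obtain ⟨_, ⟨x, ⟨-, hx⟩, -⟩⟩ := mk_ne_zero_iff.1 (lt_card_image_inter_isRich hκ hF).ne_bot
  exact ⟨x, hx⟩

end Rich

def prefixList {I : Type*} (c : ℕ → I) : ℕ → List I
  | 0 => []
  | n + 1 => c n :: prefixList c n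

theorem prefixList_congr {I : Type*} {c c' : ℕ → I} {n : ℕ} (h : ∀ k < n, c k = c' k) :
    prefixList c n = prefixList c' n := by
  induction n with
  | zero => rfl
  | succ n ih =>
    rw [prefixList, prefixList, h n n.lt_succ_self, ih fun k hk => h k (hk.trans n.lt_succ_self)]

/-- A tree of neighbourhoods `{z | EqOn z (point l) (Iio (dom l))}`, indexed by lists with the
latest choice at the head, such that `F` separates siblings below the level `height` of
their parent. -/
structure SplittingScheme {X Y : Type*} [LinearOrder X] (F : (X → Y) → X → Y) (I : Type*) where
  point : List I → X → Y
  dom : List I → X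
  height : List I → X
  eqOn_point_cons (l : List I) (i : I) : EqOn (point (i :: l)) (point l) (Iio (dom l))
  dom_le_cons (l : List I) (i : I) : dom l ≤ dom (i :: l)
  eqOn_image_cons (l : List I) (i : I) (z : X → Y) :
    EqOn z (point (i :: l)) (Iio (dom (i :: l))) → EqOn (F z) (F (point (i :: l))) (Iio (height l))
  not_eqOn_image_cons (l : List I) {i j : I} :
    i ≠ j → ¬ EqOn (F (point (i :: l))) (F (point (j :: l))) (Iio (height l))

namespace SplittingScheme

variable {X Y : Type*} [LinearOrder X] {F : (X → Y) → X → Y} {I : Type*} (S : SplittingScheme F I)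

theorem exists_branch (c : ℕ → I) :
    ∃ z, ∀ n, EqOn z (S.point (prefixList c n)) (Iio (S.dom (prefixList c n))) :=
  exists_forall_eqOn_of_eqOn_succ
    (monotone_nat_of_le_succ fun _ => Iio_subset_Iio (S.dom_le_cons _ _))
    fun _ => S.eqOn_point_cons _ _

def branch (c : ℕ → I) : X → Y := (S.exists_branch c).choose

theorem eqOn_branch (c : ℕ → I) (n : ℕ) :
    EqOn (S.branch c) (S.point (prefixList c n)) (Iio (S.dom (prefixList c n))) :=
  (S.exists_branch c).choose_spec n

theorem eq_of_eqOn_image_branch {B : X} (hB : ∀ l, S.height l ≤ B) {c c' : ℕ → I}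
    (h : EqOn (F (S.branch c)) (F (S.branch c')) (Iio B)) : c = c' := by
  classical
  by_contra hne
  have hex : ∃ n, c n ≠ c' n := Function.ne_iff.1 hne
  obtain ⟨n, hn, hmin⟩ : ∃ n, c n ≠ c' n ∧ ∀ k < n, c k = c' k :=
    ⟨Nat.find hex, Nat.find_spec hex, fun k hk => not_not.1 (Nat.find_min hex hk)⟩
  have hc := S.eqOn_image_cons _ _ _ (S.eqOn_branch c (n + 1))
  have hc' := S.eqOn_image_cons _ _ _ (S.eqOn_branch c' (n + 1))
  rw [← prefixList_congr hmin] at hc'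
  exact S.not_eqOn_image_cons _ hn
    (hc.symm.trans ((h.mono (Iio_subset_Iio (hB _))).trans hc'))

end SplittingScheme

theorem SplittingScheme.nonempty {F : (K κ → K κ) → K κ → K κ} (hκ : ℵ₀ ≤ κ)
    (hreg : κ.IsRegular) (hF : Continuous[baire κ, baire κ] F) {I : Type u} (hI : #I < κ)
    {x : K κ → K κ} (hx : IsRich F x) : Nonempty (SplittingScheme F I) := by
  have : Nonempty (K κ) := mk_ne_zero_iff.1 <| by
    rw [mk_toType, card_ord]; exact (aleph0_pos.trans_le hκ).ne'
  choose α y δ hsplit using fun p : {x // IsRich F x} × K κ =>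
    exists_split hκ hreg hF hI p.1.2 p.2
  let node : List I → {x // IsRich F x} × K κ := fun l =>
    l.rec (⟨x, hx⟩, Classical.arbitrary _) fun i _ p => (⟨y p i, (hsplit p i).1⟩, δ p i)
  exact ⟨{ point := fun l => (node l).1
           dom := fun l => (node l).2
           height := fun l => α (node l)
           eqOn_point_cons := fun l i => (hsplit (node l) i).2.1
           dom_le_cons := fun l i => (hsplit (node l) i).2.2.1
           eqOn_image_cons := fun l i => (hsplit (node l) i).2.2.2.1
           not_eqOn_image_cons := fun l i j hij => (hsplit (node l) i).2.2.2.2 j hij }⟩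

theorem exists_power_aleph0_le_card_range_resT {F : (K κ → K κ) → K κ → K κ} (hκ : ℵ₀ < κ)
    (hreg : κ.IsRegular) (hF : Continuous[baire κ, baire κ] F)
    (hbig : #(PreFun κ) < #(range F)) {I : Type u} (hI : #I < κ) :
    ∃ B : K κ, #I ^ ℵ₀ ≤ #(range fun x => resT κ (F x) B) := by
  obtain ⟨x, hx⟩ := exists_isRich hκ.le hbig
  obtain ⟨S⟩ := SplittingScheme.nonempty hκ.le hreg hF hI hx
  obtain ⟨B, hB⟩ := exists_forall_lt_of_card_lt hreg S.height
    ((mk_list_le_max I).trans_lt (max_lt hκ hI))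
  refine ⟨B, ?_⟩
  calc #I ^ ℵ₀ = #(ℕ → I) := by simp
    _ ≤ _ := mk_le_of_injective (f := fun c => ⟨resT κ (F (S.branch c)) B, _, rfl⟩)
      fun c c' h => S.eq_of_eqOn_image_branch (fun l => (hB l).le)
        (resT_eq_resT_iff.1 (congrArg Subtype.val h))

/-- If `κ` is an uncountable regular cardinal with `μ^ω ≥ κ` for some
cardinal `μ < κ` and `T` is a `κ`-Kurepa subtree of `^{<κ}κ` with `|[T]| > κ^{<κ}`, then
the set `[T]` is not a continuous image of `^κκ`. -/
theorem kurepa_not_continuous_image_of_countable_power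
    (κ : Cardinal.{u}) (hκ : ℵ₀ < κ) (hreg : κ.IsRegular)
    (μ : Cardinal.{u}) (hμκ : μ < κ) (hpow : κ ≤ μ ^ ℵ₀)
    (T : Set (PreFun κ)) (hT : IsKurepa κ T)
    (hbig : #(PreFun κ) < #(branches κ T)) :
    ¬ IsContImage κ (branches κ T) := by
  let _ := baire κ
  rintro ⟨f, hf, hsurj⟩
  have hrange : range (Subtype.val ∘ f) = branches κ T := by
    rw [hsurj.range_comp, Subtype.range_coe]
  rw [← hrange] at hbig
  obtain ⟨B, hB⟩ := exists_power_aleph0_le_card_range_resT hκ hreg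
    (continuous_subtype_val.comp hf) hbig (I := μ.out) (by rwa [mk_out])
  have hlevel : (range fun x => resT κ (f x : K κ → K κ) B) ⊆ level κ T B := by
    rintro _ ⟨x, rfl⟩
    exact ⟨(f x).2 B, rfl⟩
  rw [mk_out] at hB
  exact (hT.2.1 B).2.not_ge (hpow.trans (hB.trans (mk_le_mk_of_subset hlevel)))

end GBaire
end
end

section
/- If κ is an inaccessible cardinal, then there exists a κ-Kurepa subtree T of ^{<κ}κ consisting only of functions with values in {0,1} (i.e., T ⊆ ^{<κ}2) such that the set [T] is not a continuous image of ^κκ. -/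
open Cardinal Set

noncomputable section

/-!
The tree `T` consists of the initial segments of the `{0,1}`-valued codes of well-founded
relations on `κ` (read through a pairing bijection `κ × κ ≃ κ`). Its levels have size at most
`2^|α| < κ`, and every subset `A ⊆ κ` yields a code of its own, so `T` is Kurepa. By
regularity of `κ` the branches of `T` still code well-founded relations.

If `g` mapped `^κκ` continuously onto `[T]`, the Kunen–Martin argument would bound the ranks
of all relations coded in `[T]`: pairs `(a, s)` of a point and an initial segment, ordered by
"`s'` extends `s` and forces `a' ≺ a` in the relation coded by `g y` for every `y ⊇ s'`",
form a well-founded relation of size `κ`, hence of height `< κ⁺`, which by continuity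
dominates every such rank. But `[T]` contains codes of well-orders of `κ` of every
order type below `κ⁺`.
-/

namespace GBaire

open Order Ordinal Function TopologicalSpace

attribute [local instance] baire

section Preliminaries

variable {κ : Cardinal.{u}}

theorem mk_K : #(K κ) = κ := by rw [mk_toType, card_ord]

theorem exists_forall_lt_of_mk_lt_cof {ι : Type u} (hι : #ι < κ.ord.cof) (f : ι → K κ) :
    ∃ β, ∀ i, f i < β := by
  have hf : ¬ IsCofinal (range f) := fun h =>
    ((cof_le h).trans mk_range_le).not_gt (by rwa [cof_toType])
  simpa [IsCofinal] using hf

theorem mk_Iio_K_lt (α : K κ) : #{β : K κ // β < α} < κ := by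
  have h := mk_Iio_lt α (by rw [mk_K, type_toType])
  rw [mk_K] at h
  exact h

theorem mk_K_prod (hκ : ℵ₀ ≤ κ) : #(K κ × K κ) = κ := by
  rw [mk_prod, Cardinal.lift_id, mk_K, mul_eq_self hκ]

theorem mk_preFun_le (hreg : κ.IsRegular) (hlim : IsStrongPrelimit κ) : #(PreFun κ) ≤ κ := by
  -- `s` is determined by its graph, one of the `κ` subsets of `κ × κ` of size `< κ`.
  have hcof : (#(K κ × K κ)).ord.cof = κ := by rw [mk_K_prod hreg.aleph0_le, hreg.cof_ord]
  let graph (s : PreFun κ) : Set (K κ × K κ) := range fun β => (β.1, s.2 β)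
  have mem_graph {s : PreFun κ} {β v : K κ} :
      (β, v) ∈ graph s ↔ ∃ h : β < s.1, s.2 ⟨β, h⟩ = v := by
    simp [graph]
  have graph_le {s t : PreFun κ} (hst : graph s = graph t) (β : K κ) (h : β < s.1) :
      ∃ h' : β < t.1, t.2 ⟨β, h'⟩ = s.2 ⟨β, h⟩ :=
    mem_graph.1 (hst ▸ mem_graph.2 ⟨h, rfl⟩)
  have hgraph : Injective fun s => (⟨graph s, by
      rw [hcof]; exact mk_range_le.trans_lt (mk_Iio_K_lt s.1)⟩ :
        {S : Set (K κ × K κ) // #S < (#(K κ × K κ)).ord.cof}) := by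
    rintro ⟨α, f⟩ ⟨α', f'⟩ hst
    have hst : graph ⟨α, f⟩ = graph ⟨α', f'⟩ := congrArg Subtype.val hst
    obtain rfl : α = α' := le_antisymm (le_of_forall_lt fun β h => (graph_le hst β h).1)
      (le_of_forall_lt fun β h => (graph_le hst.symm β h).1)
    exact Sigma.ext rfl (heq_of_eq (funext fun β => (graph_le hst β β.2).2.symm))
  calc #(PreFun κ) ≤ _ := mk_le_of_injective hgraph
    _ = #(K κ × K κ) := mk_subset_mk_lt_cof (by rwa [mk_K_prod hreg.aleph0_le])
    _ = κ := mk_K_prod hreg.aleph0_le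

theorem mk_Iio_le_one_of_le_succ_bot {α : Type*} [LinearOrder α] [OrderBot α] [SuccOrder α]
    {v : α} (hv : v ≤ succ ⊥) : #{γ : α // γ < v} ≤ 1 :=
  le_one_iff_subsingleton.2 ⟨fun a b => Subtype.ext <|
    (le_bot_iff.1 (le_of_lt_succ (a.2.trans_le hv))).trans
      (le_bot_iff.1 (le_of_lt_succ (b.2.trans_le hv))).symm⟩

theorem mk_Iic_succ_bot_le_two {α : Type*} [LinearOrder α] [OrderBot α] [SuccOrder α] :
    #(Iic (succ (⊥ : α))) ≤ 2 := by
  have hsub : Iic (succ (⊥ : α)) ⊆ {succ ⊥, ⊥} := fun v hv => by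
    simpa [le_bot_iff] using le_succ_iff_eq_or_le.1 hv
  calc #(Iic (succ (⊥ : α))) ≤ #({succ ⊥, ⊥} : Set α) := mk_le_mk_of_subset hsub
    _ ≤ #({⊥} : Set α) + 1 := mk_insert_le
    _ = 2 := by rw [mk_singleton, one_add_one_eq_two]

theorem Acc.rank_lt_ord_succ {α : Type u} {r : α → α → Prop} {c : Cardinal.{u}} (hc : ℵ₀ ≤ c)
    (hα : #α ≤ c) {a : α} (h : Acc r a) : h.rank < (succ c).ord := by
  induction h with
  | intro a _ ih =>
    rw [Acc.rank_eq]
    refine Ordinal.iSup_lt_of_lt_cof ?_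
      fun b => (isSuccLimit_ord (hc.trans (le_succ c))).succ_lt (ih b b.2)
    rw [(isRegular_succ hc).cof_ord]
    exact (mk_subtype_le _).trans_lt (hα.trans_lt (lt_succ c))

theorem Acc.rank_le_of_simulation {α β : Type u} {r : α → α → Prop} {s : β → β → Prop}
    (hs : WellFounded s) (P : α → β → Prop)
    (hP : ∀ ⦃a' a b⦄, r a' a → P a b → ∃ b', P a' b' ∧ s b' b)
    {a : α} (ha : Acc r a) {b : β} (hab : P a b) : ha.rank ≤ (hs.apply b).rank := by
  induction ha generalizing b with
  | intro a _ ih =>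
    rw [Acc.rank_eq]
    refine Ordinal.iSup_le fun ⟨a', ha'⟩ => ?_
    obtain ⟨b', hb', hs'⟩ := hP ha' hab
    exact succ_le_of_lt ((ih a' ha' hb').trans_lt (Acc.rank_lt_of_rel _ hs'))

theorem exists_wellFounded_rank_eq {α : Type u} (hα : ℵ₀ ≤ #α) {o : Ordinal.{u}}
    (ho : o.card ≤ #α) : ∃ (r : α → α → Prop) (hr : WellFounded r) (a : α),
      (hr.apply a).rank = o := by
  -- Padding by `(#α).ord` makes the order type have cardinality exactly `#α`.
  obtain ⟨e⟩ := Cardinal.eq.1 (show #α = #(o + (#α).ord).ToType by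
    rw [mk_toType, card_add, card_ord, add_eq_right hα ho])
  let r := e ⁻¹'o (· < ·)
  have : IsWellOrder α r := (RelEmbedding.preimage e.toEmbedding _).isWellOrder
  have ho' : o < type r := by
    rw [type_preimage, type_toType]
    exact lt_add_of_pos_right o (ord_pos.2 (aleph0_pos.trans_le hα))
  refine ⟨r, IsWellFounded.wf, enum r ⟨o, ho'⟩, ?_⟩
  change IsWellFounded.rank r _ = o
  rw [IsWellFounded.rank_eq_typein, typein_enum]

end Preliminaries

section Neighbourhoods

variable {κ : Cardinal.{u}}

theorem mem_Nbhd_iff {x : K κ → K κ} {s : PreFun κ} : x ∈ Nbhd κ s ↔ ∀ β, x β.1 = s.2 β := by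
  obtain ⟨α, f⟩ := s
  show (⟨α, fun β => x β.1⟩ : PreFun κ) = ⟨α, f⟩ ↔ _
  simp only [Sigma.mk.injEq, heq_eq_eq, true_and, funext_iff]

theorem mem_Nbhd_resT_self (x : K κ → K κ) (α : K κ) : x ∈ Nbhd κ (resT κ x α) := rfl

theorem mem_Nbhd_resT_iff {x y : K κ → K κ} {α : K κ} :
    y ∈ Nbhd κ (resT κ x α) ↔ ∀ β < α, y β = x β := by
  rw [mem_Nbhd_iff]
  exact ⟨fun h β hβ => h ⟨β, hβ⟩, fun h β => h β.1 β.2⟩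

theorem Nbhd_resT_subset {x : K κ → K κ} {s : PreFun κ} (hx : x ∈ Nbhd κ s) {α : K κ}
    (h : s.1 ≤ α) : Nbhd κ (resT κ x α) ⊆ Nbhd κ s := fun _ hy =>
  mem_Nbhd_iff.2 fun β => (mem_Nbhd_resT_iff.1 hy β.1 (β.2.trans_le h)).trans (mem_Nbhd_iff.1 hx β)

theorem Nbhd_nonempty (s : PreFun κ) : (Nbhd κ s).Nonempty :=
  ⟨fun β => if h : β < s.1 then s.2 ⟨β, h⟩ else β, mem_Nbhd_iff.2 fun β => dif_pos β.2⟩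

theorem exists_forall_mem_Nbhd_of_antitone {s : ℕ → PreFun κ}
    (hs : Antitone fun n => Nbhd κ (s n)) : ∃ x, ∀ n, x ∈ Nbhd κ (s n) := by
  classical
  choose y hy using fun n => Nbhd_nonempty (s n)
  have hcoh {m n : ℕ} (hmn : m ≤ n) (β : K κ) (hβ : β < (s m).1) : y n β = y m β :=
    (mem_Nbhd_iff.1 (hs hmn (hy n)) ⟨β, hβ⟩).trans (mem_Nbhd_iff.1 (hy m) ⟨β, hβ⟩).symm
  refine ⟨fun β => if h : ∃ n, β < (s n).1 then y (Nat.find h) β else β,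
    fun n => mem_Nbhd_iff.2 fun ⟨β, hβ⟩ => ?_⟩
  have h : ∃ n, β < (s n).1 := ⟨n, hβ⟩
  rw [dif_pos h, ← mem_Nbhd_iff.1 (hy n) ⟨β, hβ⟩]
  exact (hcoh (Nat.find_min' h hβ) β (Nat.find_spec h)).symm

end Neighbourhoods

section Trees

variable {κ : Cardinal.{u}}

def treeOf (X : Set (K κ → K κ)) : Set (PreFun κ) := {s | ∃ x ∈ X, x ∈ Nbhd κ s}

variable {X : Set (K κ → K κ)}

theorem isSubtree_treeOf : IsSubtree κ (treeOf X) := by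
  rintro s ⟨x, hxX, hxs⟩ γ -
  exact ⟨x, hxX, mem_Nbhd_iff.2 fun β =>
    mem_Nbhd_iff.1 hxs ⟨β.1, β.2.trans_le (min_le_right _ _)⟩⟩

theorem subset_branches_treeOf : X ⊆ branches κ (treeOf X) :=
  fun x hx α => ⟨x, hx, mem_Nbhd_resT_self x α⟩

theorem level_treeOf_nonempty (hX : X.Nonempty) (α : K κ) : (level κ (treeOf X) α).Nonempty :=
  ⟨_, subset_branches_treeOf hX.some_mem α, rfl⟩

theorem treeOf_apply_mem {V : Set (K κ)} (hX : ∀ x ∈ X, ∀ γ, x γ ∈ V) {s : PreFun κ}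
    (hs : s ∈ treeOf X) (β : {b : K κ // b < s.1}) : s.2 β ∈ V := by
  obtain ⟨x, hxX, hxs⟩ := hs
  exact mem_Nbhd_iff.1 hxs β ▸ hX x hxX β

theorem mk_level_treeOf_le {V : Set (K κ)} (hX : ∀ x ∈ X, ∀ γ, x γ ∈ V) (α : K κ) :
    #(level κ (treeOf X) α) ≤ #V ^ #{β : K κ // β < α} := by
  have hsub : level κ (treeOf X) α ⊆
      range fun f : {β // β < α} → V => (⟨α, fun β => (f β).1⟩ : PreFun κ) := by
    rintro ⟨α', s⟩ ⟨⟨x, hxX, hxs⟩, rfl : α' = α⟩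
    exact ⟨fun β => ⟨x β, hX x hxX β⟩, hxs⟩
  calc #(level κ (treeOf X) α) ≤ _ := mk_le_mk_of_subset hsub
    _ ≤ #({β // β < α} → V) := mk_range_le
    _ = _ := by rw [mk_arrow, Cardinal.lift_id, Cardinal.lift_id]

end Trees

section Infinite

variable {κ : Cardinal.{u}} [Fact (ℵ₀ ≤ κ)]

instance : Nonempty (K κ) :=
  mk_ne_zero_iff.1 (by rw [mk_K]; exact (aleph0_pos.trans_le Fact.out).ne')

instance : NoMaxOrder (K κ) := Cardinal.noMaxOrder Fact.out

noncomputable instance : OrderBot (K κ) := WellFoundedLT.toOrderBot _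

theorem isTopologicalBasis_Nbhd : IsTopologicalBasis {U | ∃ s : PreFun κ, U = Nbhd κ s} where
  exists_subset_inter := by
    rintro _ ⟨s₁, rfl⟩ _ ⟨s₂, rfl⟩ x ⟨h₁, h₂⟩
    exact ⟨_, ⟨resT κ x (max s₁.1 s₂.1), rfl⟩, mem_Nbhd_resT_self x _,
      subset_inter (Nbhd_resT_subset h₁ (le_max_left _ _))
        (Nbhd_resT_subset h₂ (le_max_right _ _))⟩
  sUnion_eq := eq_univ_of_forall fun x =>
    ⟨_, ⟨resT κ x (Classical.arbitrary _), rfl⟩, mem_Nbhd_resT_self x _⟩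
  eq_generateFrom := rfl

theorem isOpen_setOf_apply_eq (γ v : K κ) : IsOpen {y : K κ → K κ | y γ = v} := by
  refine isTopologicalBasis_Nbhd.isOpen_iff.2 fun y hy => ?_
  obtain ⟨α, hα⟩ := exists_gt γ
  exact ⟨_, ⟨resT κ y α, rfl⟩, mem_Nbhd_resT_self y α,
    fun z hz => (mem_Nbhd_resT_iff.1 hz γ hα).trans hy⟩

theorem exists_resT_apply_eq_of_continuous {g : (K κ → K κ) → K κ → K κ} (hg : Continuous g)
    (x : K κ → K κ) (γ : K κ) : ∃ α, ∀ y ∈ Nbhd κ (resT κ x α), g y γ = g x γ := by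
  obtain ⟨_, ⟨s, rfl⟩, hxs, hs⟩ := isTopologicalBasis_Nbhd.exists_subset_of_mem_open
    (show x ∈ g ⁻¹' {y | y γ = g x γ} from rfl) ((isOpen_setOf_apply_eq γ (g x γ)).preimage hg)
  exact ⟨s.1, fun y hy => hs (by rwa [← show resT κ x s.1 = s from hxs])⟩

variable (κ) in
noncomputable def pairEquiv : K κ × K κ ≃ K κ :=
  (Cardinal.eq.1 ((mk_K_prod Fact.out).trans mk_K.symm)).some

def decode (z : K κ → K κ) (a b : K κ) : Prop := ⊥ < z (pairEquiv κ (a, b))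

open Classical in
noncomputable def encode (r : K κ → K κ → Prop) (γ : K κ) : K κ :=
  if r ((pairEquiv κ).symm γ).1 ((pairEquiv κ).symm γ).2 then succ ⊥ else ⊥

theorem decode_encode (r : K κ → K κ → Prop) : decode (encode r) = r := by
  funext a b
  simp only [decode, encode, eq_iff_iff]
  split_ifs with h <;> rw [Equiv.symm_apply_apply] at h
  · exact iff_of_true (bot_lt_succ _) h
  · exact iff_of_false (lt_irrefl _) h

variable (κ) in
/-- The `{0,1}`-valued codes of well-founded relations on `κ`, with `⊥` and `succ ⊥` as `0`
and `1`. -/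
def wfCodes : Set (K κ → K κ) := {z | (∀ γ, z γ ∈ Iic (succ ⊥)) ∧ WellFounded (decode z)}

theorem encode_mem_wfCodes {r : K κ → K κ → Prop} (hr : WellFounded r) :
    encode r ∈ wfCodes κ := by
  refine ⟨fun γ => ?_, by rwa [decode_encode]⟩
  unfold encode
  split_ifs <;> simp

theorem wellFounded_decode_of_mem_branches (hκ : ℵ₀ < κ.ord.cof) {z : K κ → K κ}
    (hz : z ∈ branches κ (treeOf (wfCodes κ))) : WellFounded (decode z) := by
  refine wellFounded_iff_isEmpty_descending_chain.2 ⟨fun ⟨a, ha⟩ => ?_⟩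
  obtain ⟨β, hβ⟩ := exists_forall_lt_of_mk_lt_cof (by simpa using hκ)
    fun n : ULift ℕ => pairEquiv κ (a (n.down + 1), a n.down)
  obtain ⟨w, hw, hwz⟩ := hz β
  refine (wellFounded_iff_isEmpty_descending_chain.1 hw.2).false ⟨a, fun n => ?_⟩
  rw [decode, mem_Nbhd_resT_iff.1 hwz _ (hβ ⟨n⟩)]
  exact ha n

theorem succ_le_mk_branches_treeOf_wfCodes : succ κ ≤ #(branches κ (treeOf (wfCodes κ))) := by
  let code (A : Set (K κ)) : branches κ (treeOf (wfCodes κ)) :=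
    ⟨encode fun b a => b < a ∧ b ∈ A, subset_branches_treeOf
      (encode_mem_wfCodes (Subrelation.wf (fun h => h.1) wellFounded_lt))⟩
  have hcode : Injective code := by
    intro A B hAB
    have h := congrArg (fun z => decode z.1) hAB
    simp only [code, decode_encode] at h
    ext b
    obtain ⟨a, hba⟩ := exists_gt b
    simpa [hba] using congrFun (congrFun h b) a
  calc succ κ ≤ 2 ^ κ := succ_le_of_lt (cantor κ)
    _ = #(Set (K κ)) := by rw [mk_set, mk_K]
    _ ≤ _ := mk_le_of_injective hcode

theorem wfCodes_nonempty : (wfCodes κ).Nonempty := ⟨_, encode_mem_wfCodes wellFounded_lt⟩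

theorem mk_level_treeOf_wfCodes_lt (hκ : IsStrongPrelimit κ) (α : K κ) :
    #(level κ (treeOf (wfCodes κ)) α) < κ :=
  calc #(level κ (treeOf (wfCodes κ)) α)
      _ ≤ #(Iic (succ (⊥ : K κ))) ^ #{β : K κ // β < α} :=
        mk_level_treeOf_le (fun _ hz => hz.1) α
      _ ≤ 2 ^ #{β : K κ // β < α} := power_le_power_right mk_Iic_succ_bot_le_two
      _ < κ := hκ (mk_Iio_K_lt α)

/-- The relation of the Kunen–Martin argument. -/
def forcedRel (g : (K κ → K κ) → K κ → K κ) (q p : K κ × PreFun κ) : Prop :=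
  Nbhd κ q.2 ⊆ Nbhd κ p.2 ∧ ∀ y ∈ Nbhd κ q.2, decode (g y) q.1 p.1

variable {g : (K κ → K κ) → K κ → K κ}

theorem wellFounded_forcedRel (hg : ∀ y, WellFounded (decode (g y))) :
    WellFounded (forcedRel g) := by
  refine wellFounded_iff_isEmpty_descending_chain.2 ⟨fun ⟨q, hq⟩ => ?_⟩
  obtain ⟨x, hx⟩ := exists_forall_mem_Nbhd_of_antitone (s := fun n => (q n).2)
    (antitone_nat_of_succ_le fun n => (hq n).1)
  exact (wellFounded_iff_isEmpty_descending_chain.1 (hg x)).false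
    ⟨fun n => (q n).1, fun n => (hq n).2 x (hx (n + 1))⟩

theorem exists_forcedRel_of_continuous (hg : Continuous g) {x : K κ → K κ} {a' a : K κ}
    {s : PreFun κ} (ha : decode (g x) a' a) (hx : x ∈ Nbhd κ s) :
    ∃ s', x ∈ Nbhd κ s' ∧ forcedRel g (a', s') (a, s) := by
  obtain ⟨α, hα⟩ := exists_resT_apply_eq_of_continuous hg x (pairEquiv κ (a', a))
  refine ⟨resT κ x (max s.1 α), mem_Nbhd_resT_self x _, Nbhd_resT_subset hx (le_max_left _ _),
    fun y hy => ?_⟩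
  rw [decode, hα y (Nbhd_resT_subset (mem_Nbhd_resT_self x α) (le_max_right _ _) hy)]
  exact ha

theorem rank_le_rank_forcedRel (hg : Continuous g) (hR : WellFounded (forcedRel g))
    {x : K κ → K κ} {a : K κ} (h : Acc (decode (g x)) a) {s : PreFun κ} (hx : x ∈ Nbhd κ s) :
    h.rank ≤ (hR.apply (a, s)).rank := by
  refine Acc.rank_le_of_simulation hR (fun a p => p.1 = a ∧ x ∈ Nbhd κ p.2) ?_ h ⟨rfl, hx⟩
  rintro a' a ⟨_, s⟩ ha' ⟨rfl, hs⟩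
  obtain ⟨s', hs', hR'⟩ := exists_forcedRel_of_continuous hg ha' hs
  exact ⟨(a', s'), ⟨rfl, hs'⟩, hR'⟩

theorem exists_rank_lt_of_continuous (hκ : κ.IsInaccessible) (hg : Continuous g)
    (hwf : ∀ y, WellFounded (decode (g y))) :
    ∃ Λ < (succ κ).ord, ∀ y a (h : Acc (decode (g y)) a), h.rank < Λ := by
  have hκ₀ : ℵ₀ ≤ κ := Fact.out
  have hR := wellFounded_forcedRel hwf
  have hcard : #(K κ × PreFun κ) ≤ κ := by
    rw [mk_prod, Cardinal.lift_id, Cardinal.lift_id, mk_K]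
    exact (mul_le_mul' le_rfl (mk_preFun_le hκ.isRegular hκ.isStrongPrelimit)).trans
      (mul_eq_self hκ₀).le
  refine ⟨⨆ p, succ (hR.apply p).rank, ?_, fun y a h => ?_⟩
  · refine Ordinal.iSup_lt_of_lt_cof ?_ fun p =>
      (isSuccLimit_ord (hκ₀.trans (le_succ κ))).succ_lt (Acc.rank_lt_ord_succ hκ₀ hcard _)
    rw [(isRegular_succ hκ₀).cof_ord]
    exact hcard.trans_lt (lt_succ κ)
  · exact (rank_le_rank_forcedRel hg hR h (mem_Nbhd_resT_self y (Classical.arbitrary _))).trans_lt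
      ((lt_succ _).trans_le (Ordinal.le_iSup (fun p => succ (hR.apply p).rank) _))

theorem not_isContImage_branches_treeOf_wfCodes (hκ : κ.IsInaccessible) :
    ¬ IsContImage κ (branches κ (treeOf (wfCodes κ))) := by
  rintro ⟨f, hf, hsurj⟩
  obtain ⟨Λ, hΛ, hbound⟩ := exists_rank_lt_of_continuous hκ (continuous_subtype_val.comp hf)
    fun y => wellFounded_decode_of_mem_branches (by rw [hκ.isRegular.cof_ord]; exact hκ.aleph0_lt)
      (f y).2
  obtain ⟨r, hr, a, hra⟩ := exists_wellFounded_rank_eq (α := K κ) (mk_K.symm ▸ Fact.out)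
    (by rw [mk_K]; exact le_of_lt_succ (lt_ord.1 hΛ))
  obtain ⟨x, hx⟩ := hsurj ⟨encode r, subset_branches_treeOf (encode_mem_wfCodes hr)⟩
  have hx_bound := hbound x a
  simp only [comp_apply, hx, decode_encode] at hx_bound
  exact (hx_bound (hr.apply a)).ne hra

end Infinite

/-- If `κ` is inaccessible, then there is a `κ`-Kurepa subtree `T` of
`^{<κ}κ` all of whose elements take only the values `0` and `1` (i.e. values with at
most one predecessor, so that `T ⊆ ^{<κ}2`) such that `[T]` is not a continuous image
of `^κκ`. -/
theorem exists_binary_kurepa_not_continuous_image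
    (κ : Cardinal.{u}) (hin : κ.IsInaccessible) :
    ∃ T : Set (PreFun κ), IsKurepa κ T ∧
      (∀ s ∈ T, ∀ β : {b : K κ // b < s.1}, #{γ : K κ // γ < s.2 β} ≤ 1) ∧
      ¬ IsContImage κ (branches κ T) := by
  have : Fact (ℵ₀ ≤ κ) := ⟨hin.aleph0_lt.le⟩
  refine ⟨treeOf (wfCodes κ), ⟨isSubtree_treeOf, fun α => ⟨?_, ?_⟩, ?_⟩, fun s hs β => ?_, ?_⟩
  · exact level_treeOf_nonempty wfCodes_nonempty α
  · exact mk_level_treeOf_wfCodes_lt hin.isStrongPrelimit α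
  · exact succ_le_mk_branches_treeOf_wfCodes
  · exact mk_Iio_le_one_of_le_succ_bot (treeOf_apply_mem (fun _ hz => hz.1) hs β)
  · exact not_isContImage_branches_treeOf_wfCodes hin

end GBaire
end
end
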